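/- arXiv:1406.0428 — 8 statements merged into one kernel-verified Lean document; each statement's English description precedes it below -/
import Mathlib

section
/- The number of rooted labelled trees on N vertices (where each vertex has a distinct label and any vertex may be the root) is N^(N-1). -/
/-- `f` is a rooted labelled tree on the vertex set, viewed as a parent map:
there is a unique root (vertex with no parent), and iterating the parent map
from any vertex reaches the root. -/
def IsTransmissionTree {A : Type} (f : A → Option A) : Prop :=
  (∃! r, f r = none) ∧ ∀ a, ∃ k, (fun o => Option.bind o f)^[k] (some a) = none

/-! Joyal's double count. Deleting the cyclic points of an endofunction `g` of `α`, or the path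
from the marked vertex `v` of a tree to its root, leaves a rooted forest `φ` whose roots `R` are
exactly the deleted vertices. Over a fixed forest `φ`, the endofunctions are the extensions of
`φ` by a permutation of `R`, and the marked trees are obtained by linking `R` into a path, in
some order, that starts at `v`. Both fibres have `|R|!` elements, so there are `n ^ n` marked
trees on `n` vertices, that is `n ^ (n - 1)` rooted trees. -/

open Function Set Equiv

lemma Function.exists_iterate_mem_periodicPts {α : Type*} [Finite α] (g : α → α) (x : α) :
    ∃ m, g^[m] x ∈ periodicPts g := by
  obtain ⟨i, j, hne, heq⟩ := Finite.exists_ne_map_eq_of_infinite (fun n => g^[n] x)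
  wlog hij : i < j generalizing i j
  · exact this j i hne.symm heq.symm (by omega)
  refine ⟨i, mk_mem_periodicPts (Nat.sub_pos_of_lt hij) ?_⟩
  change g^[j - i] (g^[i] x) = g^[i] x
  rw [← iterate_add_apply, Nat.sub_add_cancel hij.le]
  exact heq.symm

lemma Nat.card_fin_equiv (β : Type*) [Finite β] :
    Nat.card (Fin (Nat.card β) ≃ β) = (Nat.card β).factorial :=
  (Nat.card_congr (equivCongr (Finite.equivFin β).symm (Equiv.refl β))).trans Nat.card_perm

namespace ParentMap

section Forest

variable {α : Type*} {φ ψ : α → Option α}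

def parentStep (f : α → Option α) (o : Option α) : Option α := o.bind f

@[simp] lemma parentStep_none (f : α → Option α) : parentStep f none = none := rfl

@[simp] lemma parentStep_some (f : α → Option α) (a : α) : parentStep f (some a) = f a := rfl

lemma iterate_parentStep_none (f : α → Option α) (k : ℕ) : (parentStep f)^[k] none = none :=
  iterate_fixed rfl k

lemma iterate_parentStep_eq_none_of_le {f : α → Option α} {o : Option α} {i j : ℕ}
    (h : (parentStep f)^[i] o = none) (hij : i ≤ j) : (parentStep f)^[j] o = none := by
  rw [← Nat.sub_add_cancel hij, iterate_add_apply, h, iterate_parentStep_none]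

def IsRootedForest (f : α → Option α) : Prop := ∀ a, ∃ k, (parentStep f)^[k] (some a) = none

def roots (f : α → Option α) : Set α := {x | f x = none}

@[simp] lemma mem_roots {x : α} : x ∈ roots φ ↔ φ x = none := Iff.rfl

theorem IsRootedForest.induction (hφ : IsRootedForest φ) {P : α → Prop}
    (root : ∀ r, φ r = none → P r) (parent : ∀ a b, φ a = some b → P b → P a) (a : α) :
    P a := by
  obtain ⟨k, hk⟩ := hφ a
  induction k generalizing a with
  | zero => simp at hk
  | succ k ih =>
    cases hb : φ a with
    | none => exact root a hb
    | some b =>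
      rw [iterate_succ_apply, parentStep_some, hb] at hk
      exact parent a b hb (ih b hk)

theorem IsRootedForest.exists_root [Nonempty α] (hφ : IsRootedForest φ) : ∃ r, φ r = none :=
  hφ.induction (P := fun _ => ∃ r, φ r = none) (fun r hr => ⟨r, hr⟩) (fun _ _ _ => id)
    (Classical.arbitrary α)

theorem IsRootedForest.exists_iterate_mem_roots (hφ : IsRootedForest φ) {g : α → α}
    (hg : ∀ a b, φ a = some b → g a = b) (a : α) : ∃ m, g^[m] a ∈ roots φ :=
  hφ.induction (P := fun a => ∃ m, g^[m] a ∈ roots φ) (fun r hr => ⟨0, hr⟩)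
    (fun a b hab ⟨m, hm⟩ => ⟨m + 1, by rwa [iterate_succ_apply, hg a b hab]⟩) a

theorem IsRootedForest.of_prune (hφ : IsRootedForest φ) (h : ∀ x, ψ x = none ∨ ψ x = φ x) :
    IsRootedForest ψ := by
  have key : ∀ k o,
      (parentStep ψ)^[k] o = none ∨ (parentStep ψ)^[k] o = (parentStep φ)^[k] o := by
    intro k o
    induction k with
    | zero => exact Or.inr rfl
    | succ k ih =>
      simp only [iterate_succ_apply']
      rcases ih with h0 | heq
      · exact Or.inl (by rw [h0, parentStep_none])
      · rw [heq]
        cases (parentStep φ)^[k] o with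
        | none => exact Or.inl rfl
        | some x => exact h x
  intro a
  obtain ⟨k, hk⟩ := hφ a
  exact ⟨k, (key k (some a)).elim id (·.trans hk)⟩

theorem IsRootedForest.of_graft (hφ : IsRootedForest φ)
    (hagree : ∀ a b, φ a = some b → ψ a = some b)
    (hroots : ∀ r, φ r = none → ∃ k, (parentStep ψ)^[k] (some r) = none) :
    IsRootedForest ψ :=
  hφ.induction hroots fun a b hab ⟨k, hk⟩ =>
    ⟨k + 1, by rwa [iterate_succ_apply, parentStep_some, hagree a b hab]⟩

lemma card_roots_pos [Finite α] [Nonempty α] (hφ : IsRootedForest φ) :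
    0 < Nat.card (roots φ) :=
  have : Nonempty (roots φ) := hφ.exists_root.elim fun r hr => ⟨⟨r, hr⟩⟩
  Nat.card_pos

end Forest

section Endofunction

variable {α : Type*} {φ : α → Option α}

open Classical in
noncomputable def cutCycles (g : α → α) : α → Option α :=
  fun x => if x ∈ periodicPts g then none else some (g x)

lemma roots_cutCycles (g : α → α) : roots (cutCycles g) = periodicPts g := by
  ext x
  by_cases hx : x ∈ periodicPts g <;> simp [cutCycles, hx]

theorem isRootedForest_cutCycles [Finite α] (g : α → α) : IsRootedForest (cutCycles g) := by
  intro a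
  obtain ⟨m, hm⟩ := exists_iterate_mem_periodicPts g a
  induction m generalizing a with
  | zero => exact ⟨1, by simpa [cutCycles] using hm⟩
  | succ m ih =>
    by_cases ha : a ∈ periodicPts g
    · exact ⟨1, by simp [cutCycles, ha]⟩
    · obtain ⟨k, hk⟩ := ih (g a) hm
      exact ⟨k + 1, by simpa [cutCycles, ha] using hk⟩

noncomputable def extendPerm (φ : α → Option α) (σ : Perm (roots φ)) : α → α :=
  fun x => if h : φ x = none then σ ⟨x, h⟩ else (φ x).getD x

lemma extendPerm_of_mem_roots (σ : Perm (roots φ)) (r : roots φ) : extendPerm φ σ r = σ r :=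
  dif_pos r.2

lemma extendPerm_of_eq_some (σ : Perm (roots φ)) {a b : α} (h : φ a = some b) :
    extendPerm φ σ a = b := by
  simp [extendPerm, h]

theorem periodicPts_extendPerm [Finite α] (hφ : IsRootedForest φ) (σ : Perm (roots φ)) :
    periodicPts (extendPerm φ σ) = roots φ := by
  set g := extendPerm φ σ
  apply Subset.antisymm
  · rintro x ⟨n, hn, hx⟩
    obtain ⟨m, hm⟩ := hφ.exists_iterate_mem_roots (fun _ _ => extendPerm_of_eq_some σ) x
    have hmaps : MapsTo g (roots φ) (roots φ) := fun r hr => by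
      simpa only [g, extendPerm_of_mem_roots σ ⟨r, hr⟩] using (σ ⟨r, hr⟩).2
    have hle : m ≤ n * m := Nat.le_mul_of_pos_left m hn
    rw [← (hx.mul_const m).eq, ← Nat.sub_add_cancel hle, iterate_add_apply]
    exact hmaps.iterate _ hm
  · intro r hr
    have hsemi : Semiconj ((↑) : roots φ → α) σ g := fun r =>
      (extendPerm_of_mem_roots σ r).symm
    exact hsemi.mapsTo_periodicPts (σ.injective.mem_periodicPts ⟨r, hr⟩)

theorem cutCycles_extendPerm [Finite α] (hφ : IsRootedForest φ) (σ : Perm (roots φ)) :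
    cutCycles (extendPerm φ σ) = φ := by
  ext1 x
  cases hx : φ x with
  | none => rw [← mem_roots, roots_cutCycles, periodicPts_extendPerm hφ, mem_roots, hx]
  | some y =>
    have hper : x ∉ periodicPts (extendPerm φ σ) := by
      rw [periodicPts_extendPerm hφ, mem_roots, hx]; simp
    simp [cutCycles, hper, extendPerm_of_eq_some σ hx]

lemma bijOn_roots_of_cutCycles_eq {g : α → α} (h : cutCycles g = φ) :
    BijOn g (roots φ) (roots φ) := by
  rw [← h, roots_cutCycles]
  exact bijOn_periodicPts g

noncomputable def cutCyclesFiberEquiv [Finite α] (hφ : IsRootedForest φ) :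
    {g : α → α // cutCycles g = φ} ≃ Perm (roots φ) where
  toFun g := (bijOn_roots_of_cutCycles_eq g.2).equiv
  invFun σ := ⟨extendPerm φ σ, cutCycles_extendPerm hφ σ⟩
  left_inv := by
    rintro ⟨g, hg⟩
    ext1; ext1 x
    cases hx : φ x with
    | none => exact extendPerm_of_mem_roots _ ⟨x, hx⟩
    | some y =>
      refine (extendPerm_of_eq_some _ hx).trans ?_
      have hper : x ∉ periodicPts g := by
        rw [← roots_cutCycles, hg, mem_roots, hx]; simp
      have := congrFun hg x
      simp only [cutCycles, hper, if_false, hx, Option.some_inj] at this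
      exact this.symm
  right_inv σ := by
    ext r
    exact extendPerm_of_mem_roots σ r

theorem card_cutCycles_fiber [Finite α] (hφ : IsRootedForest φ) :
    Nat.card {g : α → α // cutCycles g = φ} = (Nat.card (roots φ)).factorial :=
  (Nat.card_congr (cutCyclesFiberEquiv hφ)).trans Nat.card_perm

end Endofunction

section Path

variable {α : Type*} {f φ : α → Option α}

def pathToRoot (f : α → Option α) (v : α) : Set α :=
  {x | ∃ i, (parentStep f)^[i] (some v) = some x}

open Classical in
noncomputable def depth (hf : IsRootedForest f) (v : α) : ℕ := Nat.find (hf v)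

lemma iterate_parentStep_eq_none_iff (hf : IsRootedForest f) {v : α} {i : ℕ} :
    (parentStep f)^[i] (some v) = none ↔ depth hf v ≤ i := by
  classical
  refine ⟨fun h => Nat.find_le h, fun h => iterate_parentStep_eq_none_of_le ?_ h⟩
  exact Nat.find_spec (hf v)

lemma depth_pos (hf : IsRootedForest f) (v : α) : 0 < depth hf v := by
  by_contra h
  simpa using (iterate_parentStep_eq_none_iff hf (i := 0)).mpr (not_lt.mp h)

/-- A repetition before the walk dies would make it periodic, so it would never reach `none`. -/
lemma injOn_iterate_parentStep (hf : IsRootedForest f) (v : α) :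
    InjOn (fun i => (parentStep f)^[i] (some v)) (Iio (depth hf v)) := by
  have key : ∀ i j, i < j → j < depth hf v →
      (parentStep f)^[i] (some v) ≠ (parentStep f)^[j] (some v) := by
    intro i j hij hj heq
    have hper : IsPeriodicPt (parentStep f) (j - i) ((parentStep f)^[i] (some v)) := by
      change _ = _
      rw [← iterate_add_apply, Nat.sub_add_cancel hij.le]
      exact heq.symm
    have hlate : (parentStep f)^[(j - i) * depth hf v] ((parentStep f)^[i] (some v)) = none := by
      rw [← iterate_add_apply, iterate_parentStep_eq_none_iff hf]
      nlinarith [Nat.sub_pos_of_lt hij]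
    rw [(hper.mul_const _).eq, iterate_parentStep_eq_none_iff hf] at hlate
    omega
  intro i hi j hj h
  rcases lt_trichotomy i j with hij | rfl | hij
  · exact absurd h (key i j hij hj)
  · rfl
  · exact absurd h.symm (key j i hij hi)

lemma isSome_iterate_parentStep (hf : IsRootedForest f) {v : α} {i : ℕ} (hi : i < depth hf v) :
    ((parentStep f)^[i] (some v)).isSome :=
  Option.ne_none_iff_isSome.mp ((iterate_parentStep_eq_none_iff hf).not.mpr (not_le.mpr hi))

noncomputable def pathEnum (hf : IsRootedForest f) (v : α) : Fin (depth hf v) ≃ pathToRoot f v :=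
  Equiv.ofBijective
    (fun i => ⟨_, i, (Option.some_get (isSome_iterate_parentStep hf i.2)).symm⟩)
    ⟨fun i j h => Fin.ext <| injOn_iterate_parentStep hf v i.2 j.2 <| by
        simpa using congrArg (some ·.1) h,
      fun ⟨x, i, hi⟩ => by
        have hlt : i < depth hf v := by
          by_contra h
          rw [(iterate_parentStep_eq_none_iff hf).mpr (not_lt.mp h)] at hi
          simp at hi
        exact ⟨⟨i, hlt⟩, Subtype.ext (by simp [hi])⟩⟩

lemma iterate_parentStep_eq_pathEnum (hf : IsRootedForest f) (v : α) (i : Fin (depth hf v)) :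
    (parentStep f)^[i] (some v) = some (pathEnum hf v i : α) :=
  (Option.some_get _).symm

open Classical in
noncomputable def cutPath (f : α → Option α) (v : α) : α → Option α :=
  fun x => if x ∈ pathToRoot f v then none else f x

lemma isRootedForest_cutPath (hf : IsRootedForest f) (v : α) : IsRootedForest (cutPath f v) :=
  hf.of_prune fun x => by by_cases hx : x ∈ pathToRoot f v <;> simp [cutPath, hx]

variable {n : ℕ}

noncomputable def linkRoots (φ : α → Option α) (e : Fin n ≃ roots φ) : α → Option α :=
  fun x =>
    if h : φ x = none then
      if h' : (e.symm ⟨x, h⟩ : ℕ) + 1 < n then some (e ⟨_, h'⟩ : α) else none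
    else φ x

lemma linkRoots_of_eq_some (e : Fin n ≃ roots φ) {a b : α} (h : φ a = some b) :
    linkRoots φ e a = some b := by
  simp [linkRoots, h]

lemma linkRoots_apply (e : Fin n ≃ roots φ) (j : Fin n) :
    linkRoots φ e (e j) =
      if h : (j : ℕ) + 1 < n then some (e ⟨j + 1, h⟩ : α) else none := by
  rw [linkRoots, dif_pos (show φ (e j) = none from (e j).2)]
  simp

lemma iterate_linkRoots (e : Fin n ≃ roots φ) (i : ℕ) (j : Fin n) :
    (parentStep (linkRoots φ e))^[i] (some (e j)) =
      if h : (j : ℕ) + i < n then some (e ⟨j + i, h⟩ : α) else none := by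
  induction i generalizing j with
  | zero => simp
  | succ i ih =>
    rw [iterate_succ_apply, parentStep_some, linkRoots_apply]
    by_cases hj : (j : ℕ) + 1 < n
    · simp only [hj, dif_pos]
      rw [ih ⟨j + 1, hj⟩]
      simp only [add_assoc, add_comm 1 i]
    · simp only [hj, dif_neg, not_false_eq_true, iterate_parentStep_none]
      rw [dif_neg (by omega)]

lemma isRootedForest_linkRoots (hφ : IsRootedForest φ) (e : Fin n ≃ roots φ) :
    IsRootedForest (linkRoots φ e) :=
  hφ.of_graft (fun _ _ => linkRoots_of_eq_some e) fun r hr =>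
    ⟨n, by
      have := iterate_linkRoots e n (e.symm ⟨r, hr⟩)
      rwa [dif_neg (by omega), apply_symm_apply] at this⟩

lemma linkRoots_eq_none_iff (e : Fin n ≃ roots φ) (hn : 0 < n) {x : α} :
    linkRoots φ e x = none ↔ x = e ⟨n - 1, Nat.sub_lt hn one_pos⟩ := by
  constructor
  · intro hx
    have hroot : φ x = none := by
      by_contra h
      obtain ⟨y, hy⟩ := Option.ne_none_iff_exists'.mp h
      simp [linkRoots_of_eq_some e hy] at hx
    obtain ⟨j, hj⟩ := e.surjective ⟨x, hroot⟩
    obtain rfl : (e j : α) = x := by rw [hj]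
    rw [linkRoots_apply] at hx
    split_ifs at hx with h
    congr 2
    ext
    simp only
    omega
  · rintro rfl
    rw [linkRoots_apply, dif_neg (by simp only; omega)]

lemma pathToRoot_linkRoots (e : Fin n ≃ roots φ) (hn : 0 < n) :
    pathToRoot (linkRoots φ e) (e ⟨0, hn⟩) = roots φ := by
  ext x
  simp only [pathToRoot, iterate_linkRoots, zero_add, mem_ofPred_eq]
  constructor
  · rintro ⟨i, hi⟩
    split_ifs at hi with h
    exact Option.some_inj.mp hi ▸ (e _).2
  · intro hx
    obtain ⟨j, hj⟩ := e.surjective ⟨x, hx⟩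
    exact ⟨j, by simp [j.2, hj]⟩

lemma cutPath_linkRoots (e : Fin n ≃ roots φ) (hn : 0 < n) :
    cutPath (linkRoots φ e) (e ⟨0, hn⟩) = φ := by
  ext1 x
  rw [cutPath, pathToRoot_linkRoots]
  cases hx : φ x with
  | none => simp [hx]
  | some y => simp [hx, linkRoots_of_eq_some e hx]

end Path

section Tree

variable {α : Type} {f φ : α → Option α}

lemma _root_.IsTransmissionTree.isRootedForest (hf : IsTransmissionTree f) : IsRootedForest f :=
  hf.2

/-- The walk from `v` dies after the root, and the root is the only vertex with no parent. -/
lemma roots_cutPath (hf : IsTransmissionTree f) (v : α) :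
    roots (cutPath f v) = pathToRoot f v := by
  ext x
  by_cases hx : x ∈ pathToRoot f v
  · simp [cutPath, hx]
  · suffices f x ≠ none by simpa [cutPath, hx]
    intro hfx
    have hpos := depth_pos hf.isRootedForest v
    set y := pathEnum hf.isRootedForest v ⟨_, Nat.sub_lt hpos one_pos⟩
    have hfy : f y = none := by
      change parentStep f (some y) = none
      rw [← iterate_parentStep_eq_pathEnum, ← iterate_succ_apply' (parentStep f),
        iterate_parentStep_eq_none_iff hf.isRootedForest]
      exact Nat.le_succ_of_pred_le le_rfl
    obtain ⟨r, -, hr⟩ := hf.1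
    obtain rfl : x = y := (hr x hfx).trans (hr y hfy).symm
    exact hx y.2

lemma isTransmissionTree_linkRoots (hφ : IsRootedForest φ) (e : Fin n ≃ roots φ) (hn : 0 < n) :
    IsTransmissionTree (linkRoots φ e) :=
  ⟨⟨_, (linkRoots_eq_none_iff e hn).mpr rfl, fun _ => (linkRoots_eq_none_iff e hn).mp⟩,
    isRootedForest_linkRoots hφ e⟩

abbrev MarkedTree (α : Type) := {f : α → Option α // IsTransmissionTree f} × α

noncomputable def markedTreeOfEnum [Finite α] [Nonempty α] (hφ : IsRootedForest φ)
    (e : Fin (Nat.card (roots φ)) ≃ roots φ) : {p : MarkedTree α // cutPath p.1.1 p.2 = φ} :=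
  ⟨(⟨linkRoots φ e, isTransmissionTree_linkRoots hφ e (card_roots_pos hφ)⟩,
    e ⟨0, card_roots_pos hφ⟩), cutPath_linkRoots e (card_roots_pos hφ)⟩

lemma markedTreeOfEnum_injective [Finite α] [Nonempty α] (hφ : IsRootedForest φ) :
    Injective (markedTreeOfEnum hφ) := by
  intro e e' h
  simp only [markedTreeOfEnum, Subtype.mk.injEq, Prod.mk.injEq] at h
  ext j
  have hj := iterate_linkRoots e j ⟨0, card_roots_pos hφ⟩
  rw [h.1, h.2, iterate_linkRoots] at hj
  simp only [zero_add, j.2, dif_pos, Fin.eta, Option.some_inj] at hj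
  exact hj.symm

lemma markedTreeOfEnum_surjective [Finite α] [Nonempty α] (hφ : IsRootedForest φ) :
    Surjective (markedTreeOfEnum hφ) := by
  rintro ⟨⟨⟨f, hf⟩, v⟩, hcut⟩
  simp only at hcut
  have hR : pathToRoot f v = roots φ := hcut ▸ (roots_cutPath hf v).symm
  have hd : Nat.card (roots φ) = depth hf.isRootedForest v := by
    rw [← hR, ← Nat.card_congr (pathEnum hf.isRootedForest v), Nat.card_fin]
  set e := (finCongr hd).trans ((pathEnum hf.isRootedForest v).trans (Equiv.setCongr hR))
  have he : ∀ j, some (e j : α) = (parentStep f)^[j] (some v) := fun j =>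
    (iterate_parentStep_eq_pathEnum hf.isRootedForest v _).symm
  refine ⟨e, Subtype.ext (Prod.ext (Subtype.ext ?_) (Option.some_inj.mp (he _)))⟩
  ext1 x
  cases hx : φ x with
  | none =>
    obtain ⟨j, hj⟩ := e.surjective ⟨x, hx⟩
    obtain rfl : (e j : α) = x := by rw [hj]
    have hstep : f (e j) = (parentStep f)^[j + 1] (some v) := by
      rw [iterate_succ_apply', ← he]; rfl
    simp only [markedTreeOfEnum, linkRoots_apply, hstep]
    split_ifs with h
    · exact he ⟨j + 1, h⟩
    · exact ((iterate_parentStep_eq_none_iff hf.isRootedForest).mpr (by omega)).symm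
  | some y =>
    have hnot : x ∉ pathToRoot f v := by simp [hR, hx]
    have := congrFun hcut x
    simp only [cutPath, hnot, if_false, hx] at this
    exact (linkRoots_of_eq_some e hx).trans this.symm

theorem card_cutPath_fiber [Finite α] [Nonempty α] (hφ : IsRootedForest φ) :
    Nat.card {p : MarkedTree α // cutPath p.1.1 p.2 = φ} = (Nat.card (roots φ)).factorial :=
  (Nat.card_eq_of_bijective _
    ⟨markedTreeOfEnum_injective hφ, markedTreeOfEnum_surjective hφ⟩).symm.trans
    (Nat.card_fin_equiv _)

theorem card_endofunctions_eq_card_markedTree [Finite α] [Nonempty α] :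
    Nat.card (α → α) = Nat.card (MarkedTree α) := by
  classical
  have := Fintype.ofFinite α
  rw [← Nat.card_congr (sigmaFiberEquiv cutCycles),
    ← Nat.card_congr (sigmaFiberEquiv fun p : MarkedTree α => cutPath p.1.1 p.2),
    Nat.card_sigma, Nat.card_sigma]
  refine Finset.sum_congr rfl fun φ _ => ?_
  by_cases hφ : IsRootedForest φ
  · rw [card_cutCycles_fiber hφ, card_cutPath_fiber hφ]
  · have : IsEmpty {g : α → α // cutCycles g = φ} :=
      ⟨fun g => hφ (g.2 ▸ isRootedForest_cutCycles g.1)⟩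
    have : IsEmpty {p : MarkedTree α // cutPath p.1.1 p.2 = φ} :=
      ⟨fun p => hφ (p.2 ▸ isRootedForest_cutPath p.1.1.2.isRootedForest p.1.2)⟩
    simp only [Nat.card_of_isEmpty]

end Tree

end ParentMap

/-- The number of rooted labelled trees on `N` vertices is `N^(N-1)`. -/
theorem cayley_rooted (N : ℕ) (hN : 1 ≤ N) :
    Nat.card {f : Fin N → Option (Fin N) // IsTransmissionTree f} = N ^ (N - 1) := by
  have : Nonempty (Fin N) := ⟨⟨0, hN⟩⟩
  have h := ParentMap.card_endofunctions_eq_card_markedTree (α := Fin N)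
  have hpow : N ^ N = N ^ (N - 1) * N := by rw [← pow_succ, Nat.sub_add_cancel hN]
  rw [Nat.card_fun, Nat.card_prod, Nat.card_fin, hpow] at h
  exact (Nat.eq_of_mul_eq_mul_right hN h).symm
end

section
/- The directed graph z(P) constructed from a tip-partition P of a rooted binary tree T is connected: for every host a_i there is a directed path from the label of the block containing the root of T to a_i. -/
/-- A rooted binary phylogenetic tree on node set `V` with tips labelled bijectively
by the host set `A`.  `parent v = none` iff `v` is the root; `depth` witnesses
acyclicity; every tip is childless and every internal (non-tip) node has exactly
two children. -/
structure PhyloTree (V A : Type) where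
  parent : V → Option V
  root : V
  depth : V → ℕ
  parent_root : parent root = none
  root_unique : ∀ v, parent v = none → v = root
  depth_lt : ∀ u v, parent u = some v → depth v < depth u
  tip : A → V
  tip_inj : Function.Injective tip
  tip_no_child : ∀ (a : A) (u : V), parent u ≠ some (tip a)
  binary : ∀ v : V, (¬ ∃ a, tip a = v) → {u : V | parent u = some v}.ncard = 2

/-- `T.anc u v` : `u` is an ancestor of `v` in `T` (following parents from `v`
reaches `u`; reflexive). -/
def PhyloTree.anc {V A : Type} (T : PhyloTree V A) (u v : V) : Prop :=
  Relation.ReflTransGen (fun x y => T.parent x = some y) v u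

/-- A tip-partition of `T`: each node gets a label `δ`, the block of a label is
its fiber, each block is a connected subtree (witnessed by its root `blockRoot`,
an ancestor of every node of the block such that every node on the tree path from
it to a block member is in the block), and the block of label `a` contains the
tip labelled `a` (hence exactly one tip, by `δ_tip`). -/
structure TipPartition {V A : Type} (T : PhyloTree V A) where
  δ : V → A
  δ_tip : ∀ a, δ (T.tip a) = a
  blockRoot : A → V
  blockRoot_label : ∀ a, δ (blockRoot a) = a
  blockRoot_anc : ∀ u, T.anc (blockRoot (δ u)) u
  block_connected : ∀ u w, T.anc (blockRoot (δ u)) w → T.anc w u → δ w = δ u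

/-- The transmission (infector) map `z(P)` induced by a tip-partition: the
infector of host `a` is the label of the block containing the parent of the root
of `a`'s block, or `none` if that root is the root of `T`. -/
def infector {V A : Type} (T : PhyloTree V A) (P : TipPartition T) (a : A) : Option A :=
  (T.parent (P.blockRoot a)).map P.δ

lemma anc_depth_le {V A : Type} (T : PhyloTree V A) {u v : V} (h : T.anc u v) :
    T.depth u ≤ T.depth v := by
  induction h with
  | refl => exact le_refl _
  | tail h1 h2 ih => exact le_trans (le_of_lt (T.depth_lt _ _ h2)) ih

/-- `z(P)` is connected: for every host `a` there is a directed path in `z(P)`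
from the label of the block containing the root of `T` to `a`. -/
theorem zP_connected {V A : Type} (T : PhyloTree V A) (P : TipPartition T) :
    ∀ a : A,
      Relation.ReflTransGen (fun x y => infector T P y = some x) (P.δ T.root) a := by
  have key : ∀ n (a : A), T.depth (P.blockRoot a) = n →
      Relation.ReflTransGen (fun x y => infector T P y = some x) (P.δ T.root) a := by
    intro n
    induction n using Nat.strong_induction_on with
    | _ n ih =>
      intro a hd
      cases h : T.parent (P.blockRoot a) with
      | none =>
        have hr : P.blockRoot a = T.root := T.root_unique _ h
        have : P.δ T.root = a := by rw [← hr]; exact P.blockRoot_label a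
        rw [this]
      | some p =>
        have hanc : T.anc (P.blockRoot (P.δ p)) p := P.blockRoot_anc p
        have hlt : T.depth (P.blockRoot (P.δ p)) < n := by
          calc T.depth (P.blockRoot (P.δ p)) ≤ T.depth p := anc_depth_le T hanc
            _ < T.depth (P.blockRoot a) := T.depth_lt _ _ h
            _ = n := hd
        have hpath := ih _ hlt (P.δ p) rfl
        exact hpath.tail (by unfold infector; rw [h]; rfl)
  exact fun a => key _ a rfl
end

section
/- The directed graph z(P) constructed from a tip-partition P of a rooted binary tree T contains no directed cycle. -/
/-- `z(P)` contains no directed cycle (edges directed from infector to infectee). -/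
theorem zP_acyclic {V A : Type} (T : PhyloTree V A) (P : TipPartition T) :
    ∀ a : A, ¬ Relation.TransGen (fun x y => infector T P y = some x) a a := by
  have anc_depth : ∀ u v, T.anc u v → T.depth u ≤ T.depth v := by
    intro u v h
    induction h with
    | refl => exact le_refl _
    | tail _ hstep ih => exact le_trans (le_of_lt (T.depth_lt _ _ hstep)) ih
  have edge_lt : ∀ x y, infector T P y = some x →
      T.depth (P.blockRoot x) < T.depth (P.blockRoot y) := by
    intro x y h
    unfold infector at h
    cases hp : T.parent (P.blockRoot y) with
    | none => rw [hp] at h; simp at h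
    | some p =>
      rw [hp] at h
      simp only [Option.map_some] at h
      injection h with h
      calc T.depth (P.blockRoot x) = T.depth (P.blockRoot (P.δ p)) := by rw [h]
        _ ≤ T.depth p := anc_depth _ _ (P.blockRoot_anc p)
        _ < T.depth (P.blockRoot y) := T.depth_lt _ _ hp
  have trans_lt : ∀ x y, Relation.TransGen (fun x y => infector T P y = some x) x y →
      T.depth (P.blockRoot x) < T.depth (P.blockRoot y) := by
    intro x y h
    induction h with
    | single h => exact edge_lt _ _ h
    | tail _ hstep ih => exact lt_trans ih (edge_lt _ _ hstep)
  intro a h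
  exact lt_irrefl _ (trans_lt a a h)
end

section
/- Let P be a tip-partition of a rooted binary tree T and suppose that in the transmission tree z(P) the host a_i is an ancestor of a_j. Then every node u of T whose block in P is labelled a_j has an ancestor v in T whose block in P is labelled a_i. -/
lemma infector_step {V A : Type} (T : PhyloTree V A) (P : TipPartition T)
    {a b : A} (h : infector T P a = some b) :
    ∀ u : V, P.δ u = a → ∃ w : V, T.anc w u ∧ P.δ w = b := by
  intro u hu
  obtain ⟨p, hp, hpb⟩ := Option.map_eq_some_iff.mp h
  refine ⟨p, ?_, hpb⟩
  have h1 : T.anc (P.blockRoot a) u := hu ▸ P.blockRoot_anc u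
  exact Relation.ReflTransGen.tail h1 hp

/-- If in the transmission tree `z(P)` host `ai` is an ancestor of host `aj`
(some iterate of the infector map sends `aj` to `ai`), then every node of `T`
whose block is labelled `aj` has an ancestor in `T` whose block is labelled `ai`. -/
theorem zP_ancestors_lemma {V A : Type} (T : PhyloTree V A) (P : TipPartition T)
    (ai aj : A)
    (h : Relation.TransGen (fun x y => infector T P x = some y) aj ai) :
    ∀ u : V, P.δ u = aj → ∃ v : V, T.anc v u ∧ P.δ v = ai := by
  induction h with
  | single hstep => exact fun u hu => infector_step T P hstep u hu
  | tail _ hstep ih =>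
    intro u hu
    obtain ⟨v, hvu, hv⟩ := ih u hu
    obtain ⟨w, hwv, hw⟩ := infector_step T P hstep v hv
    exact ⟨w, hvu.trans hwv, hw⟩
end

section
/- For N > 2, the map z from tip-partitions of a fixed rooted binary tree T with N labelled tips to transmission trees on the label set A is not surjective: there exists a transmission tree on A that is not of the form z(P) for any tip-partition P of T. -/
/-!
If `z(P)` is the broom in which `r` infects `a` and `a` infects every other host, then the
block root of `a` is an ancestor of exactly the tips other than that of `r`: the block of `r`
contains the root of `T`, hence every ancestor of the tip `r`. Clades of a rooted tree are
nested or disjoint, so for three distinct hosts `a, r₁, r₂` the complements of `{r₁}` and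
`{r₂}` cannot both be clades, and one of the two brooms centred at `a` is not realised.
-/

namespace PhyloTree

variable {V A : Type} (T : PhyloTree V A)

theorem anc_trans {u v w : V} (huv : T.anc u v) (hvw : T.anc v w) : T.anc u w :=
  hvw.trans huv

theorem anc_or_anc_of_anc {u v w : V} (hu : T.anc u w) (hv : T.anc v w) :
    T.anc u v ∨ T.anc v u :=
  Relation.ReflTransGen.total_of_right_unique
    (fun _ _ _ hx hy => Option.some_injective _ (hx.symm.trans hy)) hv hu

theorem eq_of_anc_of_parent_eq_none {u v : V} (hv : T.parent v = none) (h : T.anc u v) :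
    u = v := by
  rcases h.cases_head with h | ⟨_, hw, _⟩
  · exact h.symm
  · simp [hv] at hw

def clade (v : V) : Set A :=
  {b | T.anc v (T.tip b)}

theorem clade_subset_or_subset {u v : V} {b : A} (hu : b ∈ T.clade u) (hv : b ∈ T.clade v) :
    T.clade u ⊆ T.clade v ∨ T.clade v ⊆ T.clade u := by
  rcases T.anc_or_anc_of_anc hu hv with h | h
  · exact Or.inr fun _ hc => T.anc_trans h hc
  · exact Or.inl fun _ hc => T.anc_trans h hc

end PhyloTree

namespace TipPartition

variable {V A : Type} {T : PhyloTree V A} (P : TipPartition T)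

theorem blockRoot_anc_tip (a : A) : T.anc (P.blockRoot a) (T.tip a) := by
  simpa only [P.δ_tip] using P.blockRoot_anc (T.tip a)

theorem anc_blockRoot_of_infector_eq_some {a b : A} (h : infector T P b = some a) :
    T.anc (P.blockRoot a) (P.blockRoot b) := by
  obtain ⟨q, hq, rfl⟩ := Option.map_eq_some_iff.mp h
  exact T.anc_trans (P.blockRoot_anc q) (Relation.ReflTransGen.single hq)

theorem δ_eq_of_infector_eq_none {r : A} (hr : infector T P r = none) {v : V}
    (hv : T.anc v (T.tip r)) : P.δ v = r := by
  rcases T.anc_or_anc_of_anc hv (P.blockRoot_anc_tip r) with h | h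
  · rw [T.eq_of_anc_of_parent_eq_none (Option.map_eq_none_iff.mp hr) h, P.blockRoot_label]
  · simpa only [P.δ_tip] using P.block_connected (T.tip r) v (by rwa [P.δ_tip]) hv

end TipPartition

def broom {A : Type} [DecidableEq A] (r a : A) : A → Option A :=
  fun b => if b = r then none else if b = a then some r else some a

theorem isTransmissionTree_broom {A : Type} [DecidableEq A] {r a : A} (h : a ≠ r) :
    IsTransmissionTree (broom r a) := by
  refine ⟨⟨r, by simp [broom], fun b hb => ?_⟩, fun b => ⟨3, ?_⟩⟩
  · by_contra hbr
    by_cases hba : b = a <;> simp [broom, hbr, hba, h] at hb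
  · by_cases hbr : b = r
    · simp [broom, hbr]
    · by_cases hba : b = a <;> simp [broom, Function.iterate_succ_apply, hbr, hba, h]

theorem clade_blockRoot_of_infector_eq_broom {V A : Type} [DecidableEq A] {T : PhyloTree V A}
    (P : TipPartition T) {r a : A} (har : a ≠ r) (hP : infector T P = broom r a) :
    T.clade (P.blockRoot a) = {r}ᶜ := by
  ext b
  simp only [PhyloTree.clade, Set.mem_ofPred_eq, Set.mem_compl_singleton_iff]
  constructor
  · rintro hb rfl
    exact har ((P.blockRoot_label a).symm.trans
      (P.δ_eq_of_infector_eq_none (by simp [hP, broom]) hb))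
  · intro hbr
    by_cases hba : b = a
    · exact hba ▸ P.blockRoot_anc_tip a
    · have hb : infector T P b = some a := by simp [hP, broom, hbr, hba]
      exact T.anc_trans (P.anc_blockRoot_of_infector_eq_some hb) (P.blockRoot_anc_tip b)

theorem not_infector_eq_broom_and_eq_broom {V A : Type} [DecidableEq A] {T : PhyloTree V A}
    (P Q : TipPartition T) {a r₁ r₂ : A} (h₁ : a ≠ r₁) (h₂ : a ≠ r₂) (hr : r₁ ≠ r₂) :
    ¬ (infector T P = broom r₁ a ∧ infector T Q = broom r₂ a) := by
  rintro ⟨hP, hQ⟩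
  have hPa := clade_blockRoot_of_infector_eq_broom P h₁ hP
  have hQa := clade_blockRoot_of_infector_eq_broom Q h₂ hQ
  rcases T.clade_subset_or_subset (b := a) (by rw [hPa]; exact h₁) (by rw [hQa]; exact h₂)
    with h | h
  · rw [hPa, hQa] at h
    exact h (Ne.symm hr) rfl
  · rw [hPa, hQa] at h
    exact h hr rfl

theorem z_not_surjective_general {V A : Type} (hA : 2 < Nat.card A)
    (T : PhyloTree V A) :
    ∃ f : A → Option A, IsTransmissionTree f ∧
      ∀ P : TipPartition T, infector T P ≠ f := by
  classical
  have : Finite A := Nat.finite_of_card_ne_zero (by omega)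
  obtain ⟨a, r₁, r₂, -, -, -, h₁, h₂, hr⟩ :=
    (Set.two_lt_ncard_iff Set.finite_univ).mp (by rwa [Set.ncard_univ])
  by_contra! h
  obtain ⟨P, hP⟩ := h _ (isTransmissionTree_broom h₁)
  obtain ⟨Q, hQ⟩ := h _ (isTransmissionTree_broom h₂)
  exact not_infector_eq_broom_and_eq_broom P Q h₁ h₂ hr ⟨hP, hQ⟩

/-- For `N > 2` hosts, `z` is not surjective: for any fixed rooted binary tree
`T` with tips labelled by `A`, some transmission tree on `A` is not `z(P)` for
any tip-partition `P` of `T`. -/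
theorem z_not_surjective {V A : Type} [Fintype A] (hA : 2 < Nat.card A)
    (T : PhyloTree V A) :
    ∃ f : A → Option A, IsTransmissionTree f ∧
      ∀ P : TipPartition T, infector T P ≠ f :=
  z_not_surjective_general hA T
end

section
/- Let P be a tip-partition of a rooted binary tree T and let a_i, a_j, a_k be three distinct labels. Let u be the most recent common ancestor in T of the tips labelled a_i, a_j, a_k, and suppose the tips labelled a_j and a_k have a common ancestor v which is a strict descendant of u. If in z(P) the host a_j is an ancestor of both a_i and a_k, then the block of P containing u is labelled a_j. -/
theorem anc_trans {V A : Type} (T : PhyloTree V A) {a b c : V}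
    (h1 : T.anc a b) (h2 : T.anc b c) : T.anc a c :=
  Relation.ReflTransGen.trans h2 h1

theorem infector_blockRoot_anc {V A : Type} (T : PhyloTree V A) (P : TipPartition T)
    {x y : A} (h : infector T P x = some y) :
    T.anc (P.blockRoot y) (P.blockRoot x) := by
  unfold infector at h
  rcases Option.map_eq_some_iff.mp h with ⟨p, hp, hpy⟩
  have h1 : T.anc (P.blockRoot (P.δ p)) p := P.blockRoot_anc p
  rw [hpy] at h1
  exact anc_trans T h1 (Relation.ReflTransGen.single hp)

theorem transGen_blockRoot_anc {V A : Type} (T : PhyloTree V A) (P : TipPartition T)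
    {x y : A} (h : Relation.TransGen (fun a b => infector T P a = some b) x y) :
    T.anc (P.blockRoot y) (P.blockRoot x) := by
  induction h with
  | single h1 => exact infector_blockRoot_anc T P h1
  | tail _ h2 ih => exact anc_trans T (infector_blockRoot_anc T P h2) ih

/-- Let `u` be the most recent common ancestor in `T` of the tips labelled
`ai, aj, ak`, and let `v` be a common ancestor of the tips labelled `aj` and
`ak` that is a strict descendant of `u`.  If in `z(P)` the host `aj` is an
ancestor of both `ai` and `ak`, then the block of `P` containing `u` is
labelled `aj`. -/
theorem mrca_block_label {V A : Type} (T : PhyloTree V A) (P : TipPartition T)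
    (ai aj ak : A) (hij : ai ≠ aj) (hik : ai ≠ ak) (hjk : aj ≠ ak)
    (u v : V)
    (hui : T.anc u (T.tip ai)) (huj : T.anc u (T.tip aj)) (huk : T.anc u (T.tip ak))
    (hmrca : ∀ w : V, T.anc w (T.tip ai) → T.anc w (T.tip aj) → T.anc w (T.tip ak) →
      T.anc w u)
    (hvj : T.anc v (T.tip aj)) (hvk : T.anc v (T.tip ak))
    (huv : T.anc u v) (hvne : v ≠ u)
    (hji : Relation.TransGen (fun x y => infector T P x = some y) ai aj)
    (hjkanc : Relation.TransGen (fun x y => infector T P x = some y) ak aj) :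
    P.δ u = aj := by
  have hbr_tip : ∀ a : A, T.anc (P.blockRoot a) (T.tip a) := by
    intro a
    have := P.blockRoot_anc (T.tip a)
    rwa [P.δ_tip] at this
  have hji' := transGen_blockRoot_anc T P hji
  have hjk' := transGen_blockRoot_anc T P hjkanc
  have hanc_u : T.anc (P.blockRoot aj) u :=
    hmrca _ (anc_trans T hji' (hbr_tip ai)) (hbr_tip aj)
      (anc_trans T hjk' (hbr_tip ak))
  have := P.block_connected (T.tip aj) u (by rwa [P.δ_tip]) huj
  rwa [P.δ_tip] at this
end

section
/- For every transmission tree N on a finite label set A there exists a rooted binary tree T with tips labelled bijectively by A and a tip-partition P of T such that z(P) = N. That is, the extended map Z from tip-partitions of all phylogenies on A to transmission trees on A is surjective. -/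
/-!
Each host `a` with `n` infectees becomes a caterpillar chain `(a, 0), …, (a, n)` (the paper's
`v_{a,1}, …, v_{a,n+1}`) ending in the tip of `a`, and the chain of `a` hangs below the node
`(f a, i)`, where `i` is the position of `a` among the infectees of `f a`. A non-tip node `(a, k)`
then has exactly the two children `(a, k + 1)` and `(b, 0)`, where `b` is the `k`-th infectee of `a`.
With `height a` the number of infector steps from `a` to the root of the transmission tree, the
depth `height a * (|A| + 1) + k` decreases towards the root, and since moving to a parent never
increases the height of the host, a path that leaves the chain of `a` cannot come back to it: the
chains are the blocks of a tip-partition inducing `f`.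
-/

theorem Relation.TransGen.rank_lt {α : Type*} {r : α → α → Prop} (rank : α → ℕ)
    (hr : ∀ x y, r x y → rank y < rank x) {a b : α} (h : Relation.TransGen r a b) :
    rank b < rank a := by
  induction h with
  | single h => exact hr _ _ h
  | tail _ h ih => exact (hr _ _ h).trans ih

theorem Relation.ReflTransGen.antisymm_of_rank {α : Type*} {r : α → α → Prop} (rank : α → ℕ)
    (hr : ∀ x y, r x y → rank y < rank x) {a b : α} (hab : Relation.ReflTransGen r a b)
    (hba : Relation.ReflTransGen r b a) : a = b := by
  rw [Relation.reflTransGen_iff_eq_or_transGen] at hab hba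
  rcases hab with rfl | hab
  · rfl
  rcases hba with rfl | hba
  · rfl
  exact absurd ((hab.rank_lt rank hr).trans (hba.rank_lt rank hr)) (lt_irrefl _)

section Height

variable {A : Type} {f : A → Option A}
  (hreach : ∀ a, ∃ k, (fun o => Option.bind o f)^[k] (some a) = none)

noncomputable def height (a : A) : ℕ := Nat.find (hreach a)

theorem height_lt_of_eq_some {a b : A} (h : f b = some a) :
    height hreach a < height hreach b := by
  have hb : (fun o => Option.bind o f)^[height hreach b] (some b) = none :=
    Nat.find_spec (hreach b)
  obtain ⟨m, hm⟩ : ∃ m, height hreach b = m + 1 := by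
    refine Nat.exists_eq_succ_of_ne_zero fun h0 => ?_
    rw [h0] at hb
    exact Option.some_ne_none _ hb
  rw [hm, Function.iterate_succ_apply, Option.bind_some, h] at hb
  exact hm ▸ Nat.lt_succ_of_le (Nat.find_min' (hreach a) hb)

end Height

namespace Caterpillar

open Finset Relation
open scoped Classical

variable {A : Type} [Fintype A] (f : A → Option A)

noncomputable def children (a : A) : Finset A := {b | f b = some a}

@[simp]
theorem mem_children {a b : A} : b ∈ children f a ↔ f b = some a := by
  simp [children]

noncomputable def childIndex (b : A) : ℕ :=
  match h : f b with
  | none => 0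
  | some a => (children f a).equivFin ⟨b, (mem_children f).2 h⟩

theorem childIndex_eq {a b : A} (h : f b = some a) :
    childIndex f b = (children f a).equivFin ⟨b, (mem_children f).2 h⟩ := by
  unfold childIndex
  split
  next hb => simp [hb] at h
  next a' hb =>
    obtain rfl : a' = a := Option.some_injective _ (hb.symm.trans h)
    rfl

theorem childIndex_lt {a b : A} (h : f b = some a) : childIndex f b < #(children f a) := by
  rw [childIndex_eq f h]
  exact Fin.is_lt _

theorem eq_of_childIndex_eq {a b c : A} (hb : f b = some a) (hc : f c = some a)
    (h : childIndex f b = childIndex f c) : b = c := by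
  rw [childIndex_eq f hb, childIndex_eq f hc] at h
  simpa using (children f a).equivFin.injective (Fin.ext h)

theorem exists_childIndex_eq {a : A} {k : ℕ} (hk : k < #(children f a)) :
    ∃ b, f b = some a ∧ childIndex f b = k := by
  set b := (children f a).equivFin.symm ⟨k, hk⟩
  have hb : f b = some a := (mem_children f).1 b.2
  exact ⟨b, hb, by rw [childIndex_eq f hb, b.eta, Equiv.apply_symm_apply]⟩

@[ext]
structure Node where
  host : A
  idx : ℕ
  idx_le : idx ≤ #(children f host)

noncomputable def attachPoint (b : A) : Option (Node f) :=
  (f b).pmap (fun a h => ⟨a, childIndex f b, (childIndex_lt f h).le⟩) fun _ h => h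

noncomputable def parent : Node f → Option (Node f)
  | ⟨a, 0, _⟩ => attachPoint f a
  | ⟨a, k + 1, h⟩ => some ⟨a, k, by omega⟩

variable {f}

theorem parent_eq_some_iff {u v : Node f} :
    parent f u = some v ↔
      (v.host = u.host ∧ u.idx = v.idx + 1) ∨
        (u.idx = 0 ∧ f u.host = some v.host ∧ v.idx = childIndex f u.host) := by
  rcases u with ⟨a, _ | k, h⟩
  · simp [parent, attachPoint, Option.pmap_eq_some_iff, Node.ext_iff]
  · simp only [parent, Option.some.injEq, Node.ext_iff]
    grind

theorem parent_eq_none_iff {u : Node f} : parent f u = none ↔ u.idx = 0 ∧ f u.host = none := by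
  rcases u with ⟨a, _ | k, h⟩ <;> simp [parent, attachPoint]

theorem attachPoint_map_host (b : A) : (attachPoint f b).map Node.host = f b := by
  cases h : f b <;> simp [attachPoint, h]

theorem host_reflTransGen_of_parent_eq_some {u v : Node f} (h : parent f u = some v) :
    ReflTransGen (fun x y => f x = some y) u.host v.host := by
  rcases parent_eq_some_iff.1 h with ⟨hv, -⟩ | ⟨-, hf, -⟩
  · rw [hv]
  · exact .single hf

theorem host_reflTransGen {u v : Node f} (h : ReflTransGen (fun x y => parent f x = some y) u v) :
    ReflTransGen (fun x y => f x = some y) u.host v.host :=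
  h.lift' Node.host fun _ _ => host_reflTransGen_of_parent_eq_some

theorem reflTransGen_chain (a : A) (k : ℕ) (hk : k ≤ #(children f a)) :
    ReflTransGen (fun x y => parent f x = some y) (⟨a, k, hk⟩ : Node f) ⟨a, 0, Nat.zero_le _⟩ := by
  induction k with
  | zero => rfl
  | succ k ih => exact .head rfl (ih (by omega))

noncomputable def tipNode (a : A) : Node f := ⟨a, #(children f a), le_rfl⟩

theorem parent_ne_tipNode (a : A) (u : Node f) : parent f u ≠ some (tipNode a) := by
  intro h
  rcases parent_eq_some_iff.1 h with ⟨ha, hu⟩ | ⟨-, hf, hidx⟩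
  · have := u.idx_le
    simp only [tipNode] at ha hu
    rw [← ha] at this
    omega
  · exact (childIndex_lt f hf).ne' hidx

theorem ncard_parent_preimage {v : Node f} (hv : v.idx < #(children f v.host)) :
    {u | parent f u = some v}.ncard = 2 := by
  obtain ⟨b, hb, hbk⟩ := exists_childIndex_eq f hv
  have hpre : {u | parent f u = some v} = {⟨v.host, v.idx + 1, hv⟩, ⟨b, 0, Nat.zero_le _⟩} := by
    ext u
    simp only [Set.mem_ofPred_eq, Set.mem_insert_iff, Set.mem_singleton_iff, parent_eq_some_iff,
      Node.ext_iff]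
    constructor
    · rintro (⟨hu, hk⟩ | ⟨hu, hf, hk⟩)
      · exact .inl ⟨hu.symm, hk⟩
      · exact .inr ⟨eq_of_childIndex_eq f hf hb (hk.symm.trans hbk.symm), hu⟩
    · rintro (⟨hu, hk⟩ | ⟨rfl, hu⟩)
      · exact .inl ⟨hu.symm, hk⟩
      · exact .inr ⟨hu, hb, hbk.symm⟩
  rw [hpre, Set.ncard_pair (by simp [Node.ext_iff])]

section Tree

variable (hreach : ∀ a, ∃ k, (fun o => Option.bind o f)^[k] (some a) = none)

noncomputable def depth (v : Node f) : ℕ :=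
  height hreach v.host * (Fintype.card A + 1) + v.idx

theorem depth_lt_of_parent_eq_some {u v : Node f} (h : parent f u = some v) :
    depth hreach v < depth hreach u := by
  rcases parent_eq_some_iff.1 h with ⟨hv, hu⟩ | ⟨hu, hf, hv⟩
  · simp only [depth, hv, hu]
    omega
  · have hheight := height_lt_of_eq_some hreach hf
    have hidx : v.idx ≤ Fintype.card A := v.idx_le.trans (card_le_univ _)
    simp only [depth, hu]
    nlinarith

end Tree

theorem host_eq_of_reflTransGen
    (hreach : ∀ a, ∃ k, (fun o => Option.bind o f)^[k] (some a) = none) {u v w : Node f}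
    (huw : ReflTransGen (fun x y => parent f x = some y) u w)
    (hwv : ReflTransGen (fun x y => parent f x = some y) w v) (hvu : v.host = u.host) :
    w.host = u.host :=
  (host_reflTransGen huw).antisymm_of_rank (height hreach) (fun _ _ => height_lt_of_eq_some hreach)
    (hvu ▸ host_reflTransGen hwv) |>.symm

noncomputable def tree (hf : IsTransmissionTree f) : PhyloTree (Node f) A where
  parent := parent f
  root := ⟨hf.1.exists.choose, 0, Nat.zero_le _⟩
  depth := depth hf.2
  parent_root := parent_eq_none_iff.2 ⟨rfl, hf.1.exists.choose_spec⟩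
  root_unique v hv := by
    obtain ⟨h0, hroot⟩ := parent_eq_none_iff.1 hv
    exact Node.ext (hf.1.unique hroot hf.1.exists.choose_spec) h0
  depth_lt _ _ := depth_lt_of_parent_eq_some hf.2
  tip := tipNode
  tip_inj _ _ h := congrArg Node.host h
  tip_no_child := parent_ne_tipNode
  binary v hv := ncard_parent_preimage <| v.idx_le.lt_of_ne fun h => hv ⟨v.host, Node.ext rfl h.symm⟩

noncomputable def tipPartition (hf : IsTransmissionTree f) : TipPartition (tree hf) where
  δ := Node.host
  δ_tip _ := rfl
  blockRoot a := ⟨a, 0, Nat.zero_le _⟩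
  blockRoot_label _ := rfl
  blockRoot_anc u := reflTransGen_chain u.host u.idx u.idx_le
  block_connected _ _ hroot hw := host_eq_of_reflTransGen hf.2 hw hroot rfl

theorem infector_tipPartition (hf : IsTransmissionTree f) :
    infector (tree hf) (tipPartition hf) = f :=
  funext attachPoint_map_host

end Caterpillar

/-- Surjectivity of the extended map `Z`: every transmission tree on a finite
label set `A` arises as `z(P)` for a tip-partition `P` of some rooted binary
phylogeny with tips labelled by `A`. -/
theorem Z_surjective {A : Type} [Fintype A] (f : A → Option A)
    (hf : IsTransmissionTree f) :
    ∃ (V : Type) (T : PhyloTree V A) (P : TipPartition T),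
      infector T P = f :=
  ⟨_, _, _, Caterpillar.infector_tipPartition hf⟩
end

section
/- If P is a tip-partition of a rooted binary tree T and u is a non-root node of T whose block differs from its parent's block, then u is ancestral under P: u is an ancestor (in T) of the unique tip belonging to u's block. -/
/-- If `u` is a non-root node of `T` whose block differs from its parent's
block, then `u` is ancestral under `P`: `u` is an ancestor in `T` of the unique
tip belonging to `u`'s block. -/
theorem infection_branch_ancestral {V A : Type} (T : PhyloTree V A)
    (P : TipPartition T) (u p : V) (hp : T.parent u = some p)
    (hne : P.δ p ≠ P.δ u) :
    T.anc u (T.tip (P.δ u)) := by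
  have hroot : P.blockRoot (P.δ u) = u := by
    have hanc := P.blockRoot_anc u
    rcases Relation.ReflTransGen.cases_head hanc with h | ⟨x, hx, hxr⟩
    · exact h.symm
    · exfalso
      have hxp : x = p := by rw [hp] at hx; exact (Option.some_inj.mp hx).symm
      rw [hxp] at hxr
      exact hne (P.block_connected u p hxr (Relation.ReflTransGen.single hp))
  have := P.blockRoot_anc (T.tip (P.δ u))
  rwa [P.δ_tip, hroot] at this
end
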